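/- Let A ∈ ℝ^{m×m} with ‖A‖₂ = ρ < 1, let Σ = Σ_{i=0}^∞ A^i (Aᵀ)^i, let h be a positive integer, let z ∈ ℝ^m, and let ε_0, …, ε_{h−1} : Ω → ℝ^m be independent random vectors with square-integrable components, mean zero, and 𝔼[ε_i ε_iᵀ] = I_m. Setting w = A^h z + Σ_{i=0}^{h−1} A^i ε_i, the bias of the second-moment matrix satisfies ‖𝔼[w wᵀ] − Σ‖₂ ≤ ρ^{2h}·‖z‖₂² + ρ^{2h}/(1 − ρ²). Consequently, the bias decays geometrically in h. -/

import Mathlib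

/-
The noise terms contribute `∑_{i<h} A^i (Aᵀ)^i` to `𝔼[w wᵀ]`: flattened into one family indexed
by `(i, coordinate)`, independence, zero means and identity covariances make them orthonormal in
`L²`, and every coordinate of `∑ A^i ε_i` is a fixed linear combination of that family. Hence the
bias is `A^h z (A^h z)ᵀ - ∑_{i≥h} A^i (Aᵀ)^i`. The rank-one part has norm `‖A^h z‖² ≤ ρ^{2h} ‖z‖²`,
and the tail is dominated termwise by the geometric series `∑_{i≥h} ρ^{2i}`.
-/

open Matrix MeasureTheory ProbabilityTheory

/-- The spectral norm (largest singular value) of a real matrix, realized as the operator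
norm of the induced linear map between Euclidean spaces. -/
noncomputable def matSpectralNorm {m n : ℕ} (A : Matrix (Fin m) (Fin n) ℝ) : ℝ :=
  ‖LinearMap.toContinuousLinearMap (Matrix.toEuclideanLin A)‖

lemma norm_tsum_nat_add_le_of_le_geometric {E : Type*} [NormedAddCommGroup E]
    {f : ℕ → E} {r : ℝ} (hr₀ : 0 ≤ r) (hr₁ : r < 1) (hf : ∀ i, ‖f i‖ ≤ r ^ i) (k : ℕ) :
    ‖∑' i, f (i + k)‖ ≤ r ^ k / (1 - r) := by
  have hbound : ∀ i, ‖f (i + k)‖ ≤ r ^ k * r ^ i := fun i => by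
    rw [← pow_add, add_comm k]; exact hf _
  have hgeom := (summable_geometric_of_lt_one hr₀ hr₁).mul_left (r ^ k)
  have hnorm := hgeom.of_nonneg_of_le (fun _ => norm_nonneg _) hbound
  calc ‖∑' i, f (i + k)‖ ≤ ∑' i, ‖f (i + k)‖ := norm_tsum_le_tsum_norm hnorm
    _ ≤ ∑' i, r ^ k * r ^ i := hnorm.tsum_le_tsum hbound hgeom
    _ = r ^ k / (1 - r) := by rw [tsum_mul_left, tsum_geometric_of_lt_one hr₀ hr₁, div_eq_mul_inv]

namespace Matrix
open scoped Matrix.Norms.L2Operator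

variable {𝕜 m n : Type*} [RCLike 𝕜] [Fintype m] [Fintype n] [DecidableEq n]

lemma l2_opNorm_vecMulVec (u : m → 𝕜) (v : n → 𝕜) :
    ‖vecMulVec u (star v)‖ = ‖WithLp.toLp 2 u‖ * ‖WithLp.toLp 2 v‖ := by
  rw [← InnerProductSpace.symm_toEuclideanLin_rankOne, l2_opNorm_def, LinearEquiv.trans_apply,
    LinearEquiv.apply_symm_apply]
  exact InnerProductSpace.norm_rankOne _ _

lemma l2_opNorm_vecMulVec_mulVec_self_le [DecidableEq m] (B : Matrix m n ℝ) (z : n → ℝ) :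
    ‖vecMulVec (B *ᵥ z) (B *ᵥ z)‖ ≤ ‖B‖ ^ 2 * ∑ j, z j ^ 2 := by
  have hBz : ‖WithLp.toLp 2 (B *ᵥ z)‖ ≤ ‖B‖ * ‖WithLp.toLp 2 z‖ :=
    l2_opNorm_mulVec B (WithLp.toLp 2 z)
  have hz : ‖WithLp.toLp 2 z‖ ^ 2 = ∑ j, z j ^ 2 := by
    simp [EuclideanSpace.real_norm_sq_eq]
  calc ‖vecMulVec (B *ᵥ z) (B *ᵥ z)‖ = ‖WithLp.toLp 2 (B *ᵥ z)‖ ^ 2 := by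
        rw [sq, ← l2_opNorm_vecMulVec, star_trivial]
    _ ≤ (‖B‖ * ‖WithLp.toLp 2 z‖) ^ 2 := by gcongr
    _ = ‖B‖ ^ 2 * ∑ j, z j ^ 2 := by rw [mul_pow, hz]

lemma l2_opNorm_pow_le (A : Matrix n n 𝕜) : ∀ k : ℕ, ‖A ^ k‖ ≤ ‖A‖ ^ k
  | 0 => by
    rw [pow_zero, pow_zero, cstar_norm_def, map_one]
    exact ContinuousLinearMap.norm_id_le
  | k + 1 => norm_pow_le' A k.succ_pos

lemma l2_opNorm_pow_mul_transpose_pow_le (A : Matrix n n ℝ) (k : ℕ) :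
    ‖A ^ k * Aᵀ ^ k‖ ≤ (‖A‖ ^ 2) ^ k := by
  have hT : ‖Aᵀ ^ k‖ = ‖A ^ k‖ := by
    rw [← transpose_pow, ← conjTranspose_eq_transpose_of_trivial, l2_opNorm_conjTranspose]
  calc ‖A ^ k * Aᵀ ^ k‖ ≤ ‖A ^ k‖ * ‖Aᵀ ^ k‖ := l2_opNorm_mul _ _
    _ = ‖A ^ k‖ ^ 2 := by rw [hT, sq]
    _ ≤ (‖A‖ ^ k) ^ 2 := by gcongr; exact l2_opNorm_pow_le A k
    _ = (‖A‖ ^ 2) ^ k := by ring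

lemma l2_opNorm_tsum_sub_sum_pow_mul_transpose_pow_le (A : Matrix n n ℝ) (hA : ‖A‖ < 1)
    (k : ℕ) :
    ‖∑' i, A ^ i * Aᵀ ^ i - ∑ i ∈ Finset.range k, A ^ i * Aᵀ ^ i‖
      ≤ ‖A‖ ^ (2 * k) / (1 - ‖A‖ ^ 2) := by
  have hr₀ : 0 ≤ ‖A‖ ^ 2 := by positivity
  have hr₁ : ‖A‖ ^ 2 < 1 := by nlinarith [norm_nonneg A]
  have hsummable : Summable fun i => A ^ i * Aᵀ ^ i :=
    .of_norm_bounded (summable_geometric_of_lt_one hr₀ hr₁) (l2_opNorm_pow_mul_transpose_pow_le A)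
  rw [← hsummable.sum_add_tsum_nat_add k, add_sub_cancel_left, pow_mul]
  exact norm_tsum_nat_add_le_of_le_geometric hr₀ hr₁ (l2_opNorm_pow_mul_transpose_pow_le A) k

end Matrix

section SecondMoment

variable {Ω : Type*} [MeasurableSpace Ω] {P : Measure Ω}

noncomputable def secondMoment {n : Type*} (P : Measure Ω) (X : Ω → n → ℝ) : Matrix n n ℝ :=
  of fun j k => ∫ ω, X ω j * X ω k ∂P

lemma integral_add_mul_add_of_integral_eq_zero [IsProbabilityMeasure P] {X Y : Ω → ℝ}
    (hX : MemLp X 2 P) (hY : MemLp Y 2 P) (hX₀ : ∫ ω, X ω ∂P = 0) (hY₀ : ∫ ω, Y ω ∂P = 0)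
    (c d : ℝ) : ∫ ω, (c + X ω) * (d + Y ω) ∂P = c * d + ∫ ω, X ω * Y ω ∂P := by
  have hXY : Integrable (fun ω => X ω * Y ω) P := hX.integrable_mul hY
  have hX₁ := (hX.integrable one_le_two).mul_const d
  have hY₁ := (hY.integrable one_le_two).const_mul c
  have hX₂ : Integrable (fun ω => X ω * d + X ω * Y ω) P := hX₁.add hXY
  have hY₂ : Integrable (fun ω => c * Y ω + (X ω * d + X ω * Y ω)) P := hY₁.add hX₂
  simp_rw [add_mul, mul_add, add_assoc]
  rw [integral_add (integrable_const _) hY₂, integral_add hY₁ hX₂,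
    integral_add hX₁ hXY, integral_const_mul c (fun ω => Y ω), integral_mul_const d (fun ω => X ω),
    hX₀, hY₀]
  simp

lemma integral_dotProduct_mul_dotProduct {ι : Type*} [Fintype ι] [DecidableEq ι]
    {ξ : Ω → ι → ℝ} (hξ : ∀ t, MemLp (fun ω => ξ ω t) 2 P)
    (horth : ∀ t s, ∫ ω, ξ ω t * ξ ω s ∂P = if t = s then 1 else 0) (a b : ι → ℝ) :
    ∫ ω, (a ⬝ᵥ ξ ω) * (b ⬝ᵥ ξ ω) ∂P = a ⬝ᵥ b := by
  have hint : ∀ t s, Integrable (fun ω => a t * b s * (ξ ω t * ξ ω s)) P := fun t s =>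
    ((hξ t).integrable_mul (hξ s)).const_mul _
  calc ∫ ω, (a ⬝ᵥ ξ ω) * (b ⬝ᵥ ξ ω) ∂P
      = ∫ ω, ∑ t, ∑ s, a t * b s * (ξ ω t * ξ ω s) ∂P := by
        congr 1; ext ω
        simp only [dotProduct, Finset.sum_mul_sum]
        exact Finset.sum_congr rfl fun t _ => Finset.sum_congr rfl fun s _ => by ring
    _ = ∑ t, ∑ s, a t * b s * ∫ ω, ξ ω t * ξ ω s ∂P := by
        rw [integral_finsetSum _ fun t _ => integrable_finsetSum _ fun s _ => hint t s]
        refine Finset.sum_congr rfl fun t _ => ?_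
        rw [integral_finsetSum _ fun s _ => hint t s]
        exact Finset.sum_congr rfl fun s _ => integral_const_mul _ _
    _ = a ⬝ᵥ b := by simp [horth, dotProduct]

lemma integral_mul_eq_ite_of_iIndepFun {ι κ : Type*} [DecidableEq ι] [DecidableEq κ]
    {ε : ι → Ω → κ → ℝ} (hindep : iIndepFun ε P) (hL2 : ∀ i j, MemLp (fun ω => ε i ω j) 2 P)
    (hmean : ∀ i j, ∫ ω, ε i ω j ∂P = 0)
    (hcov : ∀ i j k, ∫ ω, ε i ω j * ε i ω k ∂P = if j = k then 1 else 0) (t s : ι × κ) :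
    ∫ ω, ε t.1 ω t.2 * ε s.1 ω s.2 ∂P = if t = s then 1 else 0 := by
  obtain ⟨i, p⟩ := t
  obtain ⟨i', q⟩ := s
  by_cases hi : i = i'
  · subst hi
    simp [hcov]
  · have hind : IndepFun (fun ω => ε i ω p) (fun ω => ε i' ω q) P :=
      (hindep.indepFun hi).comp (measurable_pi_apply p) (measurable_pi_apply q)
    rw [hind.integral_fun_mul_eq_mul_integral (hL2 i p).aestronglyMeasurable
      (hL2 i' q).aestronglyMeasurable, hmean]
    simp [hi]

lemma secondMoment_add_sum_mulVec [IsProbabilityMeasure P] {n ι κ : Type*} [Fintype ι]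
    [Fintype κ] [DecidableEq ι] [DecidableEq κ] {ε : ι → Ω → κ → ℝ} (hindep : iIndepFun ε P)
    (hL2 : ∀ i j, MemLp (fun ω => ε i ω j) 2 P) (hmean : ∀ i j, ∫ ω, ε i ω j ∂P = 0)
    (hcov : ∀ i j k, ∫ ω, ε i ω j * ε i ω k ∂P = if j = k then 1 else 0)
    (u : n → ℝ) (B : ι → Matrix n κ ℝ) :
    secondMoment P (fun ω => u + ∑ i, B i *ᵥ ε i ω) = vecMulVec u u + ∑ i, B i * (B i)ᵀ := by
  set ξ : Ω → ι × κ → ℝ := fun ω t => ε t.1 ω t.2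
  have hξ : ∀ t, MemLp (fun ω => ξ ω t) 2 P := fun t => hL2 t.1 t.2
  have hrow : ∀ j ω, (∑ i, B i *ᵥ ε i ω) j = (fun t => B t.1 j t.2) ⬝ᵥ ξ ω := fun j ω => by
    simp [ξ, dotProduct, mulVec, Fintype.sum_prod_type, Finset.sum_apply]
  have hdot : ∀ a, MemLp (fun ω => a ⬝ᵥ ξ ω) 2 P := fun a =>
    memLp_finsetSum _ fun t _ => (hξ t).const_mul (a t)
  have hdot₀ : ∀ a, ∫ ω, a ⬝ᵥ ξ ω ∂P = 0 := fun a => by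
    simp only [dotProduct]
    rw [integral_finsetSum _ fun t _ => ((hξ t).integrable one_le_two).const_mul (a t)]
    simp [integral_const_mul, ξ, hmean]
  ext j k
  simp only [secondMoment, of_apply, Pi.add_apply, hrow]
  rw [integral_add_mul_add_of_integral_eq_zero (hdot _) (hdot _) (hdot₀ _) (hdot₀ _),
    integral_dotProduct_mul_dotProduct hξ
      (integral_mul_eq_ite_of_iIndepFun hindep hL2 hmean hcov)]
  simp [vecMulVec_apply, dotProduct, Fintype.sum_prod_type, mul_apply, Matrix.sum_apply]

end SecondMoment

theorem var_second_moment_bias_bound_general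
    {Ω : Type*} [MeasurableSpace Ω] (P : Measure Ω) [IsProbabilityMeasure P]
    (m h : ℕ) (A : Matrix (Fin m) (Fin m) ℝ)
    (ρ : ℝ) (hρA : matSpectralNorm A = ρ) (hρ : ρ < 1)
    (z : Fin m → ℝ) (ε : Fin h → Ω → (Fin m → ℝ))
    (hindep : iIndepFun (m := fun _ : Fin h => (inferInstance : MeasurableSpace (Fin m → ℝ))) ε P)
    (hL2 : ∀ i j, MemLp (fun ω => ε i ω j) 2 P)
    (hmean : ∀ i j, ∫ ω, ε i ω j ∂P = 0)
    (hcov : ∀ i j k, ∫ ω, ε i ω j * ε i ω k ∂P = if j = k then 1 else 0) :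
    matSpectralNorm
        (Matrix.of (fun j k : Fin m =>
          ∫ ω, ((A ^ h) *ᵥ z + ∑ i : Fin h, (A ^ (i : ℕ)) *ᵥ ε i ω) j *
               ((A ^ h) *ᵥ z + ∑ i : Fin h, (A ^ (i : ℕ)) *ᵥ ε i ω) k ∂P)
          - ∑' i : ℕ, A ^ i * (Aᵀ) ^ i) ≤
      ρ ^ (2 * h) * (∑ j, (z j) ^ 2) + ρ ^ (2 * h) / (1 - ρ ^ 2) := by
  open scoped Matrix.Norms.L2Operator in
  have hA : ‖A‖ = ρ := hρA
  set u := A ^ h *ᵥ z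
  change ‖secondMoment P (fun ω => u + ∑ i : Fin h, A ^ (i : ℕ) *ᵥ ε i ω) - _‖ ≤ _
  rw [secondMoment_add_sum_mulVec hindep hL2 hmean hcov, ← hA]
  have hu : ‖vecMulVec u u‖ ≤ ‖A‖ ^ (2 * h) * ∑ j, z j ^ 2 :=
    calc ‖vecMulVec u u‖ ≤ ‖A ^ h‖ ^ 2 * ∑ j, z j ^ 2 := l2_opNorm_vecMulVec_mulVec_self_le _ z
      _ ≤ (‖A‖ ^ h) ^ 2 * ∑ j, z j ^ 2 := by gcongr; exact l2_opNorm_pow_le A h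
      _ = ‖A‖ ^ (2 * h) * ∑ j, z j ^ 2 := by ring
  calc _ = ‖vecMulVec u u
          - (∑' i, A ^ i * Aᵀ ^ i - ∑ i ∈ Finset.range h, A ^ i * Aᵀ ^ i)‖ := by
        rw [← Fin.sum_univ_eq_sum_range (fun i => A ^ i * Aᵀ ^ i)]
        simp only [transpose_pow]
        abel_nf
    _ ≤ ‖vecMulVec u u‖ + ‖∑' i, A ^ i * Aᵀ ^ i - ∑ i ∈ Finset.range h, A ^ i * Aᵀ ^ i‖ :=
        norm_sub_le _ _
    _ ≤ _ := add_le_add hu (l2_opNorm_tsum_sub_sum_pow_mul_transpose_pow_le A (hA ▸ hρ) h)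

/-- The explicit Gaussian VAR bias bound of Section 2 of the paper: with
`Σ = Σ_{i=0}^∞ A^i (Aᵀ)^i` and `w = A^h z + Σ_{i=0}^{h−1} A^i ε_i`, where `‖A‖₂ = ρ < 1`
and the `ε_i` are independent, mean-zero, square-integrable random vectors with identity
second moment, the bias satisfies `‖𝔼[w wᵀ] − Σ‖₂ ≤ ρ^{2h} ‖z‖₂² + ρ^{2h}/(1 − ρ²)`. -/
theorem var_second_moment_bias_bound
    {Ω : Type*} [MeasurableSpace Ω] (P : Measure Ω) [IsProbabilityMeasure P]
    (m h : ℕ) (hh : 0 < h) (A : Matrix (Fin m) (Fin m) ℝ)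
    (ρ : ℝ) (hρA : matSpectralNorm A = ρ) (hρ : ρ < 1)
    (z : Fin m → ℝ) (ε : Fin h → Ω → (Fin m → ℝ))
    (hmeas : ∀ i, Measurable (ε i))
    (hindep : iIndepFun (m := fun _ : Fin h => (inferInstance : MeasurableSpace (Fin m → ℝ))) ε P)
    (hL2 : ∀ i j, MemLp (fun ω => ε i ω j) 2 P)
    (hmean : ∀ i j, ∫ ω, ε i ω j ∂P = 0)
    (hcov : ∀ i j k, ∫ ω, ε i ω j * ε i ω k ∂P = if j = k then 1 else 0) :
    matSpectralNorm
        (Matrix.of (fun j k : Fin m =>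
          ∫ ω, ((A ^ h) *ᵥ z + ∑ i : Fin h, (A ^ (i : ℕ)) *ᵥ ε i ω) j *
               ((A ^ h) *ᵥ z + ∑ i : Fin h, (A ^ (i : ℕ)) *ᵥ ε i ω) k ∂P)
          - ∑' i : ℕ, A ^ i * (Aᵀ) ^ i) ≤
      ρ ^ (2 * h) * (∑ j, (z j) ^ 2) + ρ ^ (2 * h) / (1 - ρ ^ 2) :=
  var_second_moment_bias_bound_general P m h A ρ hρA hρ z ε hindep hL2 hmean hcov
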